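/- arXiv:1309.4365 — 3 statements merged into one kernel-verified Lean document; each statement's English description precedes it below -/
import Mathlib

section
/- Let d ≠ 0, 1/2 and let λ, μ : I → ℝ be differentiable functions on an open interval I with λ > 0 satisfying λ' = ((1-2d)/d)·λ·μ and μ' = -μ² - d(1-d)·λ². Then the function t ↦ λ(t)^(2d/(1-2d))·(μ(t)² + d²·λ(t)²) is constant on I. -/
/-!
Along a solution, `λ'/λ = ((1-2d)/d) μ`, so the weight `λ^(2d/(1-2d))` has logarithmic derivative
exactly `2μ`. Differentiating `λ^(2d/(1-2d)) (μ² + d²λ²)` therefore gives `λ^(2d/(1-2d))` times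
`2μ(μ² + d²λ²) + 2μμ' + 2d²λλ'`, which vanishes identically by the two equations; a function with
zero derivative on an interval is constant.
-/

open Set

noncomputable def firstIntegral (d l m : ℝ) : ℝ :=
  l ^ (2 * d / (1 - 2 * d)) * (m ^ 2 + d ^ 2 * l ^ 2)

theorem HasDerivAt.rpow_const_of_logDeriv {f : ℝ → ℝ} {c t : ℝ} (p : ℝ) (hft : 0 < f t)
    (hf : HasDerivAt f (c * f t) t) :
    HasDerivAt (fun x => f x ^ p) (p * c * f t ^ p) t := by
  convert hf.rpow_const (p := p) (Or.inl hft.ne') using 1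
  rw [Real.rpow_sub_one hft.ne']
  field_simp

theorem hasDerivAt_firstIntegral {d t : ℝ} {lam mu : ℝ → ℝ} (hd0 : d ≠ 0) (hd2 : d ≠ 1 / 2)
    (hpos : 0 < lam t) (hlam : HasDerivAt lam ((1 - 2 * d) / d * lam t * mu t) t)
    (hmu : HasDerivAt mu (-(mu t) ^ 2 - d * (1 - d) * (lam t) ^ 2) t) :
    HasDerivAt (fun x => firstIntegral d (lam x) (mu x)) 0 t := by
  have hden : 1 - 2 * d ≠ 0 := fun h => hd2 (by linarith)
  have hweight : HasDerivAt (fun x => lam x ^ (2 * d / (1 - 2 * d)))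
      (2 * mu t * lam t ^ (2 * d / (1 - 2 * d))) t := by
    have hlog : HasDerivAt lam ((1 - 2 * d) / d * mu t * lam t) t :=
      hlam.congr_deriv (by ring)
    convert hlog.rpow_const_of_logDeriv (2 * d / (1 - 2 * d)) hpos using 1
    field_simp
  refine (hweight.mul ((hmu.pow 2).add ((hlam.pow 2).const_mul (d ^ 2)))).congr_deriv ?_
  simp only [Pi.add_apply, Pi.pow_apply]
  field_simp
  ring

/-- First integral of the ODE system for Lagrangian submanifolds of ℂⁿ:
if `λ' = ((1-2d)/d)·λ·μ` and `μ' = -μ² - d(1-d)·λ²` with `λ > 0` on an open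
interval, then `λ^(2d/(1-2d))·(μ² + d²·λ²)` is constant on that interval. -/
theorem stmt_0 (d : ℝ) (hd0 : d ≠ 0) (hd2 : d ≠ 1 / 2)
    (a b : ℝ) (lam mu : ℝ → ℝ)
    (hpos : ∀ t ∈ Set.Ioo a b, 0 < lam t)
    (hlam : ∀ t ∈ Set.Ioo a b,
      HasDerivAt lam ((1 - 2 * d) / d * lam t * mu t) t)
    (hmu : ∀ t ∈ Set.Ioo a b,
      HasDerivAt mu (-(mu t) ^ 2 - d * (1 - d) * (lam t) ^ 2) t) :
    ∀ s ∈ Set.Ioo a b, ∀ t ∈ Set.Ioo a b,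
      lam s ^ (2 * d / (1 - 2 * d)) * ((mu s) ^ 2 + d ^ 2 * (lam s) ^ 2) =
      lam t ^ (2 * d / (1 - 2 * d)) * ((mu t) ^ 2 + d ^ 2 * (lam t) ^ 2) := by
  intro s hs t ht
  have hderiv (x) (hx : x ∈ Ioo a b) :
      HasDerivAt (fun x => firstIntegral d (lam x) (mu x)) 0 x :=
    hasDerivAt_firstIntegral hd0 hd2 (hpos x hx) (hlam x hx) (hmu x hx)
  exact isOpen_Ioo.is_const_of_deriv_eq_zero isPreconnected_Ioo
    (fun x hx => (hderiv x hx).differentiableAt.differentiableWithinAt)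
    (fun x hx => (hderiv x hx).deriv) hs ht
end

section
/- Let λ, μ : I → ℝ be differentiable with λ' = ((1-2d)/d)·λ·μ and μ' = -1 - μ² - d(1-d)·λ², where d ≠ 0, 1/2. Then the function t ↦ λ(t)^(2d/(1-2d))·(1 + μ(t)² + d²·λ(t)²) is constant on any interval where λ > 0. -/
/-! With `p = 2d/(1-2d)`, the first equation says that `λ^p` has logarithmic derivative
`p · (1-2d)/d · μ = 2μ`, while the two equations together give
`(1 + μ² + d²λ²)' = -2μ (1 + μ² + d²λ²)`. The logarithmic derivatives cancel, so the product has
derivative zero and is constant on the interval. -/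

open Set

theorem HasDerivAt.rpow_const_of_eq_mul {f : ℝ → ℝ} {c p t : ℝ}
    (hf : HasDerivAt f (c * f t) t) (hft : f t ≠ 0) :
    HasDerivAt (fun s => f s ^ p) (p * c * f t ^ p) t := by
  refine (hf.rpow_const (Or.inl hft)).congr_deriv ?_
  rw [Real.rpow_sub_one hft]
  field_simp

theorem hasDerivAt_one_add_sq_add_mul_sq {lam mu : ℝ → ℝ} {d t : ℝ}
    (hlam : HasDerivAt lam ((1 - 2 * d) / d * lam t * mu t) t)
    (hmu : HasDerivAt mu (-1 - mu t ^ 2 - d * (1 - d) * lam t ^ 2) t) :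
    HasDerivAt (fun s => 1 + mu s ^ 2 + d ^ 2 * lam s ^ 2)
      (-(2 * mu t) * (1 + mu t ^ 2 + d ^ 2 * lam t ^ 2)) t := by
  refine (((hmu.fun_pow 2).const_add 1).fun_add
    ((hlam.fun_pow 2).const_mul (d ^ 2))).congr_deriv ?_
  field_simp
  ring

/-- First integral of the ODE system for Lagrangian submanifolds of ℂPⁿ(4):
if `λ' = ((1-2d)/d)·λ·μ` and `μ' = -1 - μ² - d(1-d)·λ²`, then
`λ^(2d/(1-2d))·(1 + μ² + d²·λ²)` is constant on any interval where `λ > 0`. -/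
theorem stmt_3 (d : ℝ) (hd0 : d ≠ 0) (hd2 : d ≠ 1 / 2)
    (a b : ℝ) (lam mu : ℝ → ℝ)
    (hlam : ∀ t ∈ Set.Ioo a b,
      HasDerivAt lam ((1 - 2 * d) / d * lam t * mu t) t)
    (hmu : ∀ t ∈ Set.Ioo a b,
      HasDerivAt mu (-1 - (mu t) ^ 2 - d * (1 - d) * (lam t) ^ 2) t)
    (hpos : ∀ t ∈ Set.Ioo a b, 0 < lam t) :
    ∀ s ∈ Set.Ioo a b, ∀ t ∈ Set.Ioo a b,
      lam s ^ (2 * d / (1 - 2 * d)) * (1 + (mu s) ^ 2 + d ^ 2 * (lam s) ^ 2) =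
      lam t ^ (2 * d / (1 - 2 * d)) * (1 + (mu t) ^ 2 + d ^ 2 * (lam t) ^ 2) := by
  have hexp : 2 * d / (1 - 2 * d) * ((1 - 2 * d) / d) = 2 := by
    have : 1 - 2 * d ≠ 0 := fun h => hd2 (by linarith)
    field_simp
  have hderiv : ∀ t ∈ Ioo a b, HasDerivAt
      (fun s => lam s ^ (2 * d / (1 - 2 * d)) * (1 + mu s ^ 2 + d ^ 2 * lam s ^ 2)) 0 t := by
    intro t ht
    have hpow := HasDerivAt.rpow_const_of_eq_mul (p := 2 * d / (1 - 2 * d))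
      ((hlam t ht).congr_deriv (by ring : _ = (1 - 2 * d) / d * mu t * lam t)) (hpos t ht).ne'
    refine (hpow.mul (hasDerivAt_one_add_sq_add_mul_sq (hlam t ht) (hmu t ht))).congr_deriv ?_
    rw [← mul_assoc, hexp]
    ring
  intro s hs t ht
  exact isOpen_Ioo.is_const_of_deriv_eq_zero isPreconnected_Ioo
    (fun x hx => (hderiv x hx).differentiableAt.differentiableWithinAt)
    (fun x hx => (hderiv x hx).deriv) hs ht
end

section
/- Suppose real numbers n ≥ 3 (an integer), d, λ with λ ≠ 0, d ≠ 0, d ≠ 1/2 satisfy both S = (n-2)·d·(1-2d)²·λ² and S = (n+2d)·d·(1-2d)·λ² for some S ≥ 0. Then d = 1/(1-n) and S ≥ 0 forces d ≥ 0, giving a contradiction; hence no such S exists. -/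
/-!
Equating the two expressions and cancelling `d (1 - 2d) λ²` leaves `d (n - 1) = -1`, so `d < 0`;
then `(n - 2) d (1 - 2d)² λ² < 0` for `n ≥ 3`, contradicting `S ≥ 0`.
-/

lemma mul_sub_one_eq_neg_one_of_eq {n d : ℝ} (hd0 : d ≠ 0) (hd2 : 1 - 2 * d ≠ 0)
    (h : (n - 2) * d * (1 - 2 * d) ^ 2 = (n + 2 * d) * d * (1 - 2 * d)) :
    d * (n - 1) = -1 := by
  have hfactor : -2 * (d * (1 - 2 * d)) * (d * (n - 1) + 1) = 0 := by linear_combination h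
  have hne : -2 * (d * (1 - 2 * d)) ≠ 0 := by simp [hd0, hd2]
  linear_combination (mul_eq_zero.mp hfactor).resolve_left hne

lemma neg_of_mul_sub_one_eq_neg_one {n d : ℝ} (hn : 1 < n) (h : d * (n - 1) = -1) : d < 0 := by
  nlinarith

lemma sub_two_mul_mul_sq_mul_sq_neg {n d lam : ℝ} (hn : 2 < n) (hd : d < 0) (hlam : lam ≠ 0) :
    (n - 2) * d * (1 - 2 * d) ^ 2 * lam ^ 2 < 0 := by
  have hpos : 0 < (n - 2) * (1 - 2 * d) ^ 2 * lam ^ 2 :=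
    mul_pos (mul_pos (by linarith) (pow_pos (by linarith) 2)) (by positivity)
  nlinarith

/-- The algebraic contradiction in the proof of Lemma 2.1(i): for `n ≥ 3`,
`λ ≠ 0`, `d ≠ 0, 1/2`, there is no `S ≥ 0` equal simultaneously to
`(n-2)·d·(1-2d)²·λ²` and `(n+2d)·d·(1-2d)·λ²`. -/
theorem stmt_6 (n : ℕ) (hn : 3 ≤ n) (d lam : ℝ)
    (hlam : lam ≠ 0) (hd0 : d ≠ 0) (hd2 : d ≠ 1 / 2) :
    ¬ ∃ S : ℝ, 0 ≤ S ∧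
      S = ((n : ℝ) - 2) * d * (1 - 2 * d) ^ 2 * lam ^ 2 ∧
      S = ((n : ℝ) + 2 * d) * d * (1 - 2 * d) * lam ^ 2 := by
  rintro ⟨S, hS, h1, h2⟩
  have hn3 : (3 : ℝ) ≤ n := by exact_mod_cast hn
  have hd2' : 1 - 2 * d ≠ 0 := fun h => hd2 (by linarith)
  have heq : ((n : ℝ) - 2) * d * (1 - 2 * d) ^ 2 = ((n : ℝ) + 2 * d) * d * (1 - 2 * d) :=
    mul_right_cancel₀ (pow_ne_zero 2 hlam) (h1.symm.trans h2)
  have hdneg : d < 0 :=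
    neg_of_mul_sub_one_eq_neg_one (by linarith) (mul_sub_one_eq_neg_one_of_eq hd0 hd2' heq)
  have hneg := sub_two_mul_mul_sq_mul_sq_neg (n := (n : ℝ)) (by linarith) hdneg hlam
  linarith
end
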